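/- Let E = ℝⁿ, let 0 ≤ L < 1, and let p, q ∈ E. Then ‖q − p‖ ≤ L‖q + p‖ if and only if ‖((1 − L²)/(1 + L²))·q − p‖ ≤ (2L/(1 + L²))·‖p‖. -/

import Mathlib

/-!
Squaring both sides and expanding, each condition becomes a comparison of `‖q‖² + ‖p‖²` with
`⟪q, p⟫`. With `c = (1 - L²)/(1 + L²)` and `r = 2L/(1 + L²)` one has `c² + r² = 1`, and then both
comparisons reduce to the same inequality `c (‖q‖² + ‖p‖²) ≤ 2 ⟪q, p⟫`.
-/

open RealInnerProductSpace

variable {E : Type*} [NormedAddCommGroup E] [InnerProductSpace ℝ E]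

theorem norm_sub_le_mul_norm_add_iff {L : ℝ} (hL : 0 ≤ L) (p q : E) :
    ‖q - p‖ ≤ L * ‖q + p‖ ↔ (1 - L ^ 2) * (‖q‖ ^ 2 + ‖p‖ ^ 2) ≤ 2 * (1 + L ^ 2) * ⟪q, p⟫ := by
  rw [← sq_le_sq₀ (norm_nonneg _) (by positivity), mul_pow, norm_sub_sq_real, norm_add_sq_real]
  constructor <;> intro h <;> linarith

theorem norm_smul_sub_le_mul_norm_iff {c r : ℝ} (hc : 0 < c) (hr : 0 ≤ r) (hcr : c ^ 2 + r ^ 2 = 1)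
    (p q : E) :
    ‖c • q - p‖ ≤ r * ‖p‖ ↔ c * (‖q‖ ^ 2 + ‖p‖ ^ 2) ≤ 2 * ⟪q, p⟫ := by
  rw [← sq_le_sq₀ (norm_nonneg _) (by positivity), mul_pow, norm_sub_sq_real, norm_smul,
    real_inner_smul_left, Real.norm_of_nonneg hc.le, show r ^ 2 = 1 - c ^ 2 by linarith,
    ← sub_nonneg]
  have gap : (1 - c ^ 2) * ‖p‖ ^ 2 - ((c * ‖q‖) ^ 2 - 2 * (c * ⟪q, p⟫) + ‖p‖ ^ 2) =
      c * (2 * ⟪q, p⟫ - c * (‖q‖ ^ 2 + ‖p‖ ^ 2)) := by ring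
  rw [gap, mul_nonneg_iff_of_pos_left hc, sub_nonneg]

theorem monotone_residual_rescaling_identity
    (n : ℕ) (L : ℝ) (hL0 : 0 ≤ L) (hL1 : L < 1)
    (p q : EuclideanSpace ℝ (Fin n)) :
    ‖q - p‖ ≤ L * ‖q + p‖ ↔
      ‖((1 - L ^ 2) / (1 + L ^ 2)) • q - p‖ ≤ (2 * L / (1 + L ^ 2)) * ‖p‖ := by
  have hden : 0 < 1 + L ^ 2 := by positivity
  have hc : 0 < (1 - L ^ 2) / (1 + L ^ 2) := div_pos (by nlinarith) hden
  have hcr : ((1 - L ^ 2) / (1 + L ^ 2)) ^ 2 + (2 * L / (1 + L ^ 2)) ^ 2 = 1 := by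
    field_simp
    ring
  rw [norm_sub_le_mul_norm_add_iff hL0, norm_smul_sub_le_mul_norm_iff hc (by positivity) hcr,
    div_mul_eq_mul_div, div_le_iff₀ hden, mul_right_comm]
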